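/- Let A_{i,j} (i = 1,…,N, j = 0,1,2) be Hermitian operators with A_{i,j}² ≤ 1 on finite-dimensional Hilbert spaces, and define the Bell operator Î_l = (N−1)(−1)^{l₁} Ã₁₁ ⊗ ⊗_{i=2}^N A_{i,1} + Σ_{i=2}^N (−1)^{l₁+l_i} Ã₁₀ ⊗ A_{i,0} (acting trivially outside parties 1, i) − Σ_{i=2}^N (−1)^{l_i} A_{1,2} ⊗ A_{i,2} ⊗ ⊗_{j=2,j≠i}^N A_{j,1}, where Ã₁₀ = (A_{1,0} − A_{1,1})/√2 and Ã₁₁ = (A_{1,0} + A_{1,1})/√2. Then Î_l ≤ 3(N−1)·1 in the operator (Loewner) order. -/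

import Mathlib

open Matrix
open scoped ComplexOrder

namespace Stmt5

/-- Tensor product over the `N` parties of the one-party matrices `f i`. -/
def tens {N : ℕ} {d : Fin N → ℕ} (f : ∀ i, Matrix (Fin (d i)) (Fin (d i)) ℂ) :
    Matrix (∀ i, Fin (d i)) (∀ i, Fin (d i)) ℂ :=
  fun s t => ∏ i, f i (s i) (t i)

/-- The Bell operator `Î_l` built from the observables `A i j` of the `N` parties
(party `1` of the paper is indexed `0` here). -/
noncomputable def bellOp {N : ℕ} (h : 0 < N) (d : Fin N → ℕ) (l : Fin N → Fin 2)
    (A : ∀ i : Fin N, Fin 3 → Matrix (Fin (d i)) (Fin (d i)) ℂ) :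
    Matrix (∀ i, Fin (d i)) (∀ i, Fin (d i)) ℂ :=
  let z : Fin N := ⟨0, h⟩
  ((N - 1 : ℂ) * (-1 : ℂ) ^ (l z : ℕ)) •
      tens (fun i => if i = z then ((Real.sqrt 2 : ℂ))⁻¹ • (A i 0 + A i 1) else A i 1)
    + (∑ i ∈ Finset.univ.erase z, ((-1 : ℂ) ^ ((l z : ℕ) + (l i : ℕ))) •
        tens (fun j => if j = z then ((Real.sqrt 2 : ℂ))⁻¹ • (A j 0 - A j 1)
          else if j = i then A j 0 else 1))
    - ∑ i ∈ Finset.univ.erase z, ((-1 : ℂ) ^ (l i : ℕ)) •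
        tens (fun j => if j = z then A j 2 else if j = i then A j 2 else A j 1)

/-! ### Generic matrix helper lemmas -/

section helpers
variable {n : Type*} [Fintype n]

lemma psd_add {A B : Matrix n n ℂ} (hA : A.PosSemidef) (hB : B.PosSemidef) :
    (A + B).PosSemidef := by
  refine ⟨hA.1.add hB.1, fun x => ?_⟩
  have := add_nonneg (hA.2 x) (hB.2 x)
  simpa [mul_add, add_mul] using this

lemma psd_smul_real {A : Matrix n n ℂ} (hA : A.PosSemidef) {c : ℝ} (hc : 0 ≤ c) :
    ((c : ℂ) • A).PosSemidef := by
  refine ⟨?_, fun x => ?_⟩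
  · unfold Matrix.IsHermitian
    rw [Matrix.conjTranspose_smul, hA.1]
    congr 1
    simp
  · have h := hA.2 x
    simpa [Finsupp.mul_sum, mul_assoc, mul_left_comm] using
      smul_nonneg (Complex.zero_le_real.mpr hc) h

lemma psd_sum {ι : Type*} (s : Finset ι) (f : ι → Matrix n n ℂ)
    (h : ∀ i ∈ s, (f i).PosSemidef) : (∑ i ∈ s, f i).PosSemidef := by
  classical
  induction s using Finset.induction_on with
  | empty => simpa using Matrix.PosSemidef.zero
  | @insert a s ha ih =>
      rw [Finset.sum_insert ha]
      exact psd_add (h a (Finset.mem_insert_self a s))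
        (ih fun i hi => h i (Finset.mem_insert_of_mem hi))

lemma psd_nat_smul {A : Matrix n n ℂ} (hA : A.PosSemidef) (k : ℕ) :
    ((k : ℂ) • A).PosSemidef := by
  have : ((k : ℂ) : ℂ) = ((k : ℝ) : ℂ) := by push_cast; ring
  rw [this]; exact psd_smul_real hA (by positivity)

lemma psd_half {A : Matrix n n ℂ} (hA : ((2:ℂ) • A).PosSemidef) : A.PosSemidef := by
  have : A = ((1/2 : ℝ) : ℂ) • ((2:ℂ) • A) := by
    rw [smul_smul]; norm_num
  rw [this]; exact psd_smul_real hA (by norm_num)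

lemma herm_sq {M : Matrix n n ℂ} (h : M.IsHermitian) : (M * M).PosSemidef := by
  have : M * M = Mᴴ * M := by rw [h.eq]
  rw [this]; exact Matrix.posSemidef_conjTranspose_mul_self M

lemma herm_smul {c : ℂ} (hc : star c = c) {M : Matrix n n ℂ} (h : M.IsHermitian) :
    (c • M).IsHermitian := by
  unfold Matrix.IsHermitian
  rw [Matrix.conjTranspose_smul, hc, h.eq]

lemma star_neg_one_pow (k : ℕ) : star ((-1 : ℂ) ^ k) = (-1 : ℂ) ^ k := by simp

lemma neg_one_pow_mul_self (k : ℕ) : ((-1 : ℂ) ^ k) * ((-1 : ℂ) ^ k) = 1 := by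
  rw [← pow_add]; exact Even.neg_one_pow ⟨k, rfl⟩

lemma sq_sub (c : ℂ) (hc : c * c = 1) (X Y : Matrix n n ℂ) :
    (c • X - Y) * (c • X - Y) = X * X + Y * Y - c • (X * Y) - c • (Y * X) := by
  simp only [sub_mul, mul_sub, smul_mul_assoc, mul_smul_comm, smul_sub, smul_add,
    smul_smul, hc, one_smul]
  abel

lemma sq_add (c : ℂ) (hc : c * c = 1) (X Y : Matrix n n ℂ) :
    (c • X + Y) * (c • X + Y) = X * X + Y * Y + c • (X * Y) + c • (Y * X) := by
  simp only [add_mul, mul_add, smul_mul_assoc, mul_smul_comm, smul_add, smul_smul, hc, one_smul]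
  abel

lemma slot_identity [DecidableEq n] (X Y : Matrix n n ℂ) :
    ((1 : Matrix n n ℂ) - X * X) + ((1 : Matrix n n ℂ) - Y * Y)
      + (2⁻¹ : ℂ) • ((X + Y) * (X + Y)) + (2⁻¹ : ℂ) • ((X - Y) * (X - Y))
      = (1 : Matrix n n ℂ) + 1 := by
  have hexp : (X + Y) * (X + Y) + (X - Y) * (X - Y)
      = (X * X + Y * Y) + (X * X + Y * Y) := by noncomm_ring
  have h2 : (2⁻¹ : ℂ) • ((X + Y) * (X + Y)) + (2⁻¹ : ℂ) • ((X - Y) * (X - Y))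
      = X * X + Y * Y := by
    rw [← smul_add, hexp, ← two_smul ℂ (X * X + Y * Y), smul_smul]
    norm_num
  rw [add_assoc (((1 : Matrix n n ℂ) - X * X) + ((1 : Matrix n n ℂ) - Y * Y)), h2]
  abel

end helpers

/-! ### Properties of `tens` -/

section tens
variable {N : ℕ} {d : Fin N → ℕ}

lemma tens_mul (f g : ∀ i, Matrix (Fin (d i)) (Fin (d i)) ℂ) :
    tens f * tens g = tens (fun i => f i * g i) := by
  ext s t
  simp only [tens, Matrix.mul_apply]
  rw [Fintype.prod_sum (fun i k => f i (s i) k * g i k (t i))]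
  exact Finset.sum_congr rfl fun x _ => (Finset.prod_mul_distrib).symm

lemma tens_one : tens (fun i => (1 : Matrix (Fin (d i)) (Fin (d i)) ℂ)) = 1 := by
  ext s t
  simp only [tens, Matrix.one_apply]
  by_cases h : s = t
  · subst h; simp
  · rw [if_neg h, Finset.prod_eq_zero_iff.mpr]
    obtain ⟨i, hi⟩ := Function.ne_iff.mp h
    exact ⟨i, Finset.mem_univ i, by simp [hi]⟩

lemma tens_conjTranspose (f : ∀ i, Matrix (Fin (d i)) (Fin (d i)) ℂ) :
    (tens f)ᴴ = tens (fun i => (f i)ᴴ) := by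
  ext s t
  simp only [tens, conjTranspose_apply]
  exact (map_prod (starRingEnd ℂ) _ _)

lemma tens_herm (f : ∀ i, Matrix (Fin (d i)) (Fin (d i)) ℂ)
    (hf : ∀ i, (f i).IsHermitian) : (tens f).IsHermitian := by
  show (tens f)ᴴ = tens f
  rw [tens_conjTranspose]
  exact congrArg tens (funext fun i => (hf i).eq)

lemma tens_psd (f : ∀ i, Matrix (Fin (d i)) (Fin (d i)) ℂ) (h : ∀ i, (f i).PosSemidef) :
    (tens f).PosSemidef := by
  have hc : ∀ i, ∃ B : Matrix (Fin (d i)) (Fin (d i)) ℂ, f i = Bᴴ * B := by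
    intro i; open scoped MatrixOrder Matrix.Norms.L2Operator in exact CStarAlgebra.nonneg_iff_eq_star_mul_self.mp (h i).nonneg
  choose B hB using hc
  have : tens f = (tens B)ᴴ * tens B := by
    rw [tens_conjTranspose, tens_mul]
    exact congrArg tens (funext fun i => hB i)
  rw [this]
  exact Matrix.posSemidef_conjTranspose_mul_self _

lemma tens_ite_add (i₀ : Fin N) (X Y f : ∀ j, Matrix (Fin (d j)) (Fin (d j)) ℂ) :
    tens (fun j => if j = i₀ then X j + Y j else f j)
      = tens (fun j => if j = i₀ then X j else f j)
        + tens (fun j => if j = i₀ then Y j else f j) := by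
  ext s t
  simp only [tens, Matrix.add_apply]
  rw [← Finset.mul_prod_erase Finset.univ _ (Finset.mem_univ i₀),
      ← Finset.mul_prod_erase Finset.univ _ (Finset.mem_univ i₀),
      ← Finset.mul_prod_erase Finset.univ _ (Finset.mem_univ i₀)]
  have hrest : ∀ (g : ∀ j, Matrix (Fin (d j)) (Fin (d j)) ℂ),
      (∏ j ∈ Finset.univ.erase i₀, (if j = i₀ then g j else f j) (s j) (t j))
        = ∏ j ∈ Finset.univ.erase i₀, f j (s j) (t j) := by
    intro g
    refine Finset.prod_congr rfl fun j hj => ?_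
    rw [if_neg (Finset.ne_of_mem_erase hj)]
  rw [hrest, hrest, hrest]
  simp only [if_true, Matrix.add_apply]
  ring

lemma tens_ite_smul (i₀ : Fin N) (c : ℂ) (X f : ∀ j, Matrix (Fin (d j)) (Fin (d j)) ℂ) :
    tens (fun j => if j = i₀ then c • X j else f j)
      = c • tens (fun j => if j = i₀ then X j else f j) := by
  ext s t
  simp only [tens, Matrix.smul_apply, smul_eq_mul]
  rw [← Finset.mul_prod_erase Finset.univ _ (Finset.mem_univ i₀),
      ← Finset.mul_prod_erase Finset.univ _ (Finset.mem_univ i₀)]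
  have hrest : ∀ (g : ∀ j, Matrix (Fin (d j)) (Fin (d j)) ℂ),
      (∏ j ∈ Finset.univ.erase i₀, (if j = i₀ then g j else f j) (s j) (t j))
        = ∏ j ∈ Finset.univ.erase i₀, f j (s j) (t j) := by
    intro g
    refine Finset.prod_congr rfl fun j hj => ?_
    rw [if_neg (Finset.ne_of_mem_erase hj)]
  rw [hrest, hrest]
  simp only [if_true, Matrix.smul_apply, smul_eq_mul]
  ring

lemma one_sub_tens_psd (f : ∀ i, Matrix (Fin (d i)) (Fin (d i)) ℂ)
    (h1 : ∀ i, (f i).PosSemidef)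
    (h2 : ∀ i, ((1 : Matrix (Fin (d i)) (Fin (d i)) ℂ) - f i).PosSemidef) :
    ((1 : Matrix (∀ i, Fin (d i)) (∀ i, Fin (d i)) ℂ) - tens f).PosSemidef := by
  have key : ∀ s : Finset (Fin N),
      ((1 : Matrix (∀ i, Fin (d i)) (∀ i, Fin (d i)) ℂ)
        - tens (fun j => if j ∈ s then f j else 1)).PosSemidef := by
    intro s
    classical
    induction s using Finset.induction_on with
    | empty => simpa [tens_one] using (Matrix.PosSemidef.zero)
    | @insert a s ha ih =>
        set g : ∀ j, Matrix (Fin (d j)) (Fin (d j)) ℂ :=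
          fun j => if j ∈ s then f j else 1 with hg
        have e1 : (fun j => if j ∈ insert a s then f j else 1)
            = fun j => if j = a then f j else g j := by
          funext j
          by_cases hj : j = a
          · subst hj; simp [ha, hg]
          · by_cases hjs : j ∈ s <;> simp [hj, hjs, hg, Finset.mem_insert]
        have e2 : (fun j => if j ∈ s then f j else 1)
            = fun j => if j = a then (1 : Matrix (Fin (d j)) (Fin (d j)) ℂ) else g j := by
          funext j
          by_cases hj : j = a
          · subst hj; simp [ha, hg]
          · simp [hj, hg]
        have split : tens (fun j => if j = a then (1 : Matrix (Fin (d j)) (Fin (d j)) ℂ) else g j)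
            = tens (fun j => if j = a then (1 - f j) else g j)
              + tens (fun j => if j = a then f j else g j) := by
          have e3 : (fun j => if j = a then (1 : Matrix (Fin (d j)) (Fin (d j)) ℂ) else g j)
              = fun j => if j = a then (1 - f j) + f j else g j := by
            funext j; by_cases hj : j = a <;> simp [hj]
          rw [e3, tens_ite_add a (fun j => 1 - f j) f g]
        have step : (1 : Matrix (∀ i, Fin (d i)) (∀ i, Fin (d i)) ℂ)
            - tens (fun j => if j ∈ insert a s then f j else 1)
            = ((1 : Matrix (∀ i, Fin (d i)) (∀ i, Fin (d i)) ℂ)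
                - tens (fun j => if j ∈ s then f j else 1))
              + tens (fun j => if j = a then (1 - f j) else g j) := by
          rw [e1, e2, split]; abel
        rw [step]
        refine psd_add ih (tens_psd _ fun i => ?_)
        by_cases hi : i = a
        · subst hi; simpa using h2 i
        · by_cases his : i ∈ s <;> simp [hi, hg, his, h1 i, Matrix.PosSemidef.one]
  have : f = fun j => if j ∈ (Finset.univ : Finset (Fin N)) then f j else 1 := by
    funext j; simp
  rw [this]; exact key Finset.univ

end tens

/-! ### The slot functions -/

section slots
variable {N : ℕ} {d : Fin N → ℕ}
  (A : ∀ i : Fin N, Fin 3 → Matrix (Fin (d i)) (Fin (d i)) ℂ) (z : Fin N)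

noncomputable def fT : ∀ j, Matrix (Fin (d j)) (Fin (d j)) ℂ :=
  fun i => if i = z then ((Real.sqrt 2 : ℂ))⁻¹ • (A i 0 + A i 1) else A i 1

noncomputable def fS (i : Fin N) : ∀ j, Matrix (Fin (d j)) (Fin (d j)) ℂ :=
  fun j => if j = z then ((Real.sqrt 2 : ℂ))⁻¹ • (A j 0 - A j 1)
    else if j = i then A j 0 else 1

def fU (i : Fin N) : ∀ j, Matrix (Fin (d j)) (Fin (d j)) ℂ :=
  fun j => if j = z then A j 2 else if j = i then A j 2 else A j 1

noncomputable def fAf : ∀ j, Matrix (Fin (d j)) (Fin (d j)) ℂ :=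
  fun j => if j = z then ((Real.sqrt 2 : ℂ))⁻¹ • (A j 0 + A j 1) else 1

def fBf : ∀ j, Matrix (Fin (d j)) (Fin (d j)) ℂ :=
  fun j => if j = z then 1 else A j 1

noncomputable def fR1 : ∀ j, Matrix (Fin (d j)) (Fin (d j)) ℂ :=
  fun j => if j = z then ((Real.sqrt 2 : ℂ))⁻¹ • (A j 0 - A j 1) else 1

def fR2 (i : Fin N) : ∀ j, Matrix (Fin (d j)) (Fin (d j)) ℂ :=
  fun j => if j = i then A j 0 else 1

def fQ1 : ∀ j, Matrix (Fin (d j)) (Fin (d j)) ℂ :=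
  fun j => if j = z then A j 2 else 1

def fQ2 (i : Fin N) : ∀ j, Matrix (Fin (d j)) (Fin (d j)) ℂ :=
  fun j => if j = z then 1 else if j = i then A j 2 else A j 1

lemma fAf_mul_fBf : (fun j => fAf A z j * fBf A z j) = fT A z := by
  funext j
  by_cases hj : j = z <;> simp [fAf, fBf, fT, hj]

lemma fBf_mul_fAf : (fun j => fBf A z j * fAf A z j) = fT A z := by
  funext j
  by_cases hj : j = z <;> simp [fAf, fBf, fT, hj]

variable {i : Fin N}

lemma fR1_mul_fR2 (hi : i ≠ z) : (fun j => fR1 A z j * fR2 A i j) = fS A z i := by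
  funext j
  by_cases hj : j = z
  · subst hj; simp [fR1, fR2, fS, Ne.symm hi]
  · by_cases hji : j = i
    · subst hji; simp [fR1, fR2, fS, hj]
    · simp [fR1, fR2, fS, hj, hji]

lemma fR2_mul_fR1 (hi : i ≠ z) : (fun j => fR2 A i j * fR1 A z j) = fS A z i := by
  funext j
  by_cases hj : j = z
  · subst hj; simp [fR1, fR2, fS, Ne.symm hi]
  · by_cases hji : j = i
    · subst hji; simp [fR1, fR2, fS, hj]
    · simp [fR1, fR2, fS, hj, hji]

lemma fQ1_mul_fQ2 (hi : i ≠ z) : (fun j => fQ1 A z j * fQ2 A z i j) = fU A z i := by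
  funext j
  by_cases hj : j = z
  · subst hj; simp [fQ1, fQ2, fU]
  · by_cases hji : j = i
    · subst hji; simp [fQ1, fQ2, fU, hj]
    · simp [fQ1, fQ2, fU, hj, hji]

lemma fQ2_mul_fQ1 (hi : i ≠ z) : (fun j => fQ2 A z i j * fQ1 A z j) = fU A z i := by
  funext j
  by_cases hj : j = z
  · subst hj; simp [fQ1, fQ2, fU]
  · by_cases hji : j = i
    · subst hji; simp [fQ1, fQ2, fU, hj]
    · simp [fQ1, fQ2, fU, hj, hji]

end slots

/-! ### The sum-of-squares decomposition -/

section main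
variable {N : ℕ} {d : Fin N → ℕ}
  (A : ∀ i : Fin N, Fin 3 → Matrix (Fin (d i)) (Fin (d i)) ℂ) (z : Fin N)
  (l : Fin N → Fin 2)

noncomputable def Pm : Matrix (∀ i, Fin (d i)) (∀ i, Fin (d i)) ℂ :=
  ((-1 : ℂ) ^ (l z : ℕ)) • tens (fAf A z) - tens (fBf A z)

noncomputable def Rm (i : Fin N) : Matrix (∀ i, Fin (d i)) (∀ i, Fin (d i)) ℂ :=
  ((-1 : ℂ) ^ ((l z : ℕ) + (l i : ℕ))) • tens (fR1 A z) - tens (fR2 A i)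

noncomputable def Qm (i : Fin N) : Matrix (∀ i, Fin (d i)) (∀ i, Fin (d i)) ℂ :=
  ((-1 : ℂ) ^ (l i : ℕ)) • tens (fQ1 A z) + tens (fQ2 A z i)

noncomputable def RHS : Matrix (∀ i, Fin (d i)) (∀ i, Fin (d i)) ℂ :=
  ((N : ℂ) - 1) • (Pm A z l * Pm A z l)
  + ∑ i ∈ Finset.univ.erase z, Rm A z l i * Rm A z l i
  + ∑ i ∈ Finset.univ.erase z, Qm A z l i * Qm A z l i
  + ((N : ℂ) - 1) • ((2 : ℂ) • 1 - tens (fun j => fAf A z j * fAf A z j)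
      - tens (fun j => fR1 A z j * fR1 A z j))
  + ((N : ℂ) - 1) • (1 - tens (fun j => fBf A z j * fBf A z j))
  + ∑ i ∈ Finset.univ.erase z, (1 - tens (fun j => fR2 A i j * fR2 A i j))
  + ((N : ℂ) - 1) • (1 - tens (fun j => fQ1 A z j * fQ1 A z j))
  + ∑ i ∈ Finset.univ.erase z, (1 - tens (fun j => fQ2 A z i j * fQ2 A z i j))

lemma key (hN : 2 ≤ N) :
    (2 : ℂ) • ((3 * (N - 1 : ℂ)) • (1 : Matrix (∀ i, Fin (d i)) (∀ i, Fin (d i)) ℂ)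
      - (((N - 1 : ℂ) * (-1 : ℂ) ^ (l z : ℕ)) • tens (fT A z)
        + (∑ i ∈ Finset.univ.erase z,
            ((-1 : ℂ) ^ ((l z : ℕ) + (l i : ℕ))) • tens (fS A z i))
        - ∑ i ∈ Finset.univ.erase z, ((-1 : ℂ) ^ (l i : ℕ)) • tens (fU A z i)))
    = RHS A z l := by
  have hPP : Pm A z l * Pm A z l
      = tens (fun j => fAf A z j * fAf A z j) + tens (fun j => fBf A z j * fBf A z j)
        - ((-1 : ℂ) ^ (l z : ℕ)) • tens (fT A z)
        - ((-1 : ℂ) ^ (l z : ℕ)) • tens (fT A z) := by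
    rw [Pm, sq_sub _ (neg_one_pow_mul_self _), tens_mul, tens_mul, tens_mul, tens_mul,
      fAf_mul_fBf, fBf_mul_fAf]
  have hRR : ∀ i ∈ Finset.univ.erase z, Rm A z l i * Rm A z l i
      = tens (fun j => fR1 A z j * fR1 A z j) + tens (fun j => fR2 A i j * fR2 A i j)
        - ((-1 : ℂ) ^ ((l z : ℕ) + (l i : ℕ))) • tens (fS A z i)
        - ((-1 : ℂ) ^ ((l z : ℕ) + (l i : ℕ))) • tens (fS A z i) := by
    intro i hi
    rw [Rm, sq_sub _ (neg_one_pow_mul_self _), tens_mul, tens_mul, tens_mul, tens_mul,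
      fR1_mul_fR2 A z (Finset.ne_of_mem_erase hi), fR2_mul_fR1 A z (Finset.ne_of_mem_erase hi)]
  have hQQ : ∀ i ∈ Finset.univ.erase z, Qm A z l i * Qm A z l i
      = tens (fun j => fQ1 A z j * fQ1 A z j) + tens (fun j => fQ2 A z i j * fQ2 A z i j)
        + ((-1 : ℂ) ^ (l i : ℕ)) • tens (fU A z i)
        + ((-1 : ℂ) ^ (l i : ℕ)) • tens (fU A z i) := by
    intro i hi
    rw [Qm, sq_add _ (neg_one_pow_mul_self _), tens_mul, tens_mul, tens_mul, tens_mul,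
      fQ1_mul_fQ2 A z (Finset.ne_of_mem_erase hi), fQ2_mul_fQ1 A z (Finset.ne_of_mem_erase hi)]
  rw [RHS, hPP, Finset.sum_congr rfl hRR, Finset.sum_congr rfl hQQ]
  have hcard : (Finset.univ.erase z).card = N - 1 := by
    rw [Finset.card_erase_of_mem (Finset.mem_univ z), Finset.card_univ, Fintype.card_fin]
  simp only [Finset.sum_add_distrib, Finset.sum_sub_distrib, Finset.sum_const, hcard]
  have hns : ∀ M : Matrix (∀ i, Fin (d i)) (∀ i, Fin (d i)) ℂ,
      (N - 1) • M = ((N : ℂ) - 1) • M := by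
    intro M
    rw [← Nat.cast_smul_eq_nsmul ℂ, Nat.cast_sub (by omega : 1 ≤ N), Nat.cast_one]
  simp only [hns]
  module

lemma rhs_psd (hN : 2 ≤ N)
    (hherm : ∀ i j, (A i j).IsHermitian)
    (hcontr : ∀ i j, ((1 : Matrix (Fin (d i)) (Fin (d i)) ℂ) - A i j * A i j).PosSemidef) :
    (RHS A z l).PosSemidef := by
  classical
  have hstar : star (((Real.sqrt 2 : ℝ) : ℂ))⁻¹ = ((Real.sqrt 2 : ℝ) : ℂ)⁻¹ := by
    simp [Complex.star_def, map_inv₀, Complex.conj_ofReal]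
  have hNat : ((N : ℂ) - 1) = ((N - 1 : ℕ) : ℂ) := by
    rw [Nat.cast_sub (by omega : 1 ≤ N), Nat.cast_one]
  have hsqrt2 : ((Real.sqrt 2 : ℂ))⁻¹ * ((Real.sqrt 2 : ℂ))⁻¹ = (2 : ℂ)⁻¹ := by
    rw [← mul_inv]
    congr 1
    norm_cast
    exact Real.mul_self_sqrt (by norm_num)
  have hermAf : ∀ j, ((fAf A z) j).IsHermitian := fun j => by
    unfold fAf; split
    · exact herm_smul hstar ((hherm j 0).add (hherm j 1))
    · exact isHermitian_one
  have hermBf : ∀ j, ((fBf A z) j).IsHermitian := fun j => by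
    unfold fBf; split
    · exact isHermitian_one
    · exact hherm j 1
  have hermR1 : ∀ j, ((fR1 A z) j).IsHermitian := fun j => by
    unfold fR1; split
    · exact herm_smul hstar ((hherm j 0).sub (hherm j 1))
    · exact isHermitian_one
  have hermR2 : ∀ i j, ((fR2 A i) j).IsHermitian := fun i j => by
    unfold fR2; split
    · exact hherm j 0
    · exact isHermitian_one
  have hermQ1 : ∀ j, ((fQ1 A z) j).IsHermitian := fun j => by
    unfold fQ1; split
    · exact hherm j 2
    · exact isHermitian_one
  have hermQ2 : ∀ i j, ((fQ2 A z i) j).IsHermitian := fun i j => by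
    unfold fQ2; split
    · exact isHermitian_one
    · split
      · exact hherm j 2
      · exact hherm j 1
  have hermP : (Pm A z l).IsHermitian :=
    (herm_smul (star_neg_one_pow _) (tens_herm _ hermAf)).sub (tens_herm _ hermBf)
  have hermR : ∀ i, (Rm A z l i).IsHermitian := fun i =>
    (herm_smul (star_neg_one_pow _) (tens_herm _ hermR1)).sub (tens_herm _ (hermR2 i))
  have hermQ : ∀ i, (Qm A z l i).IsHermitian := fun i =>
    (herm_smul (star_neg_one_pow _) (tens_herm _ hermQ1)).add (tens_herm _ (hermQ2 i))
  rw [RHS]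
  refine psd_add (psd_add (psd_add (psd_add (psd_add (psd_add (psd_add ?_ ?_) ?_) ?_) ?_) ?_) ?_) ?_
  · rw [hNat]; exact psd_nat_smul (herm_sq hermP) _
  · exact psd_sum _ _ fun i _ => herm_sq (hermR i)
  · exact psd_sum _ _ fun i _ => herm_sq (hermQ i)
  · rw [hNat]
    refine psd_nat_smul ?_ _
    -- rewrite the squared slot functions
    have eA : (fun j => fAf A z j * fAf A z j)
        = fun j => if j = z then (2⁻¹ : ℂ) • ((A j 0 + A j 1) * (A j 0 + A j 1)) else 1 := by
      funext j
      by_cases hj : j = z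
      · simp only [fAf, hj, if_true, smul_mul_assoc, mul_smul_comm, smul_smul, hsqrt2]
      · simp [fAf, hj]
    have eR : (fun j => fR1 A z j * fR1 A z j)
        = fun j => if j = z then (2⁻¹ : ℂ) • ((A j 0 - A j 1) * (A j 0 - A j 1)) else 1 := by
      funext j
      by_cases hj : j = z
      · simp only [fR1, hj, if_true, smul_mul_assoc, mul_smul_comm, smul_smul, hsqrt2]
      · simp [fR1, hj]
    have hsum : tens (fun j => if j = z then (1 : Matrix (Fin (d j)) (Fin (d j)) ℂ)
            - A j 0 * A j 0 else 1)
          + tens (fun j => if j = z then (1 : Matrix (Fin (d j)) (Fin (d j)) ℂ)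
            - A j 1 * A j 1 else 1)
          + (2⁻¹ : ℂ) • tens (fun j => if j = z then (A j 0 + A j 1) * (A j 0 + A j 1) else 1)
          + (2⁻¹ : ℂ) • tens (fun j => if j = z then (A j 0 - A j 1) * (A j 0 - A j 1) else 1)
        = (2 : ℂ) • 1 := by
      rw [← tens_ite_smul z (2⁻¹ : ℂ) (fun j => (A j 0 + A j 1) * (A j 0 + A j 1)) (fun _ => 1),
          ← tens_ite_smul z (2⁻¹ : ℂ) (fun j => (A j 0 - A j 1) * (A j 0 - A j 1)) (fun _ => 1),
          ← tens_ite_add z _ _ (fun _ => 1), ← tens_ite_add z _ _ (fun _ => 1),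
          ← tens_ite_add z _ _ (fun _ => 1)]
      have : (fun j => if j = z then
            ((1 : Matrix (Fin (d j)) (Fin (d j)) ℂ) - A j 0 * A j 0)
              + ((1 : Matrix (Fin (d j)) (Fin (d j)) ℂ) - A j 1 * A j 1)
              + (2⁻¹ : ℂ) • ((A j 0 + A j 1) * (A j 0 + A j 1))
              + (2⁻¹ : ℂ) • ((A j 0 - A j 1) * (A j 0 - A j 1))
            else (1 : Matrix (Fin (d j)) (Fin (d j)) ℂ))
          = fun j => if j = z then (1 : Matrix (Fin (d j)) (Fin (d j)) ℂ) + 1 else 1 := by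
        funext j
        by_cases hj : j = z
        · rw [if_pos hj, if_pos hj, slot_identity]
        · rw [if_neg hj, if_neg hj]
      rw [this, tens_ite_add z (fun j => (1 : Matrix (Fin (d j)) (Fin (d j)) ℂ))
          (fun j => (1 : Matrix (Fin (d j)) (Fin (d j)) ℂ)) (fun _ => 1)]
      have e1 : (fun j => if j = z then (1 : Matrix (Fin (d j)) (Fin (d j)) ℂ) else 1)
          = fun j => (1 : Matrix (Fin (d j)) (Fin (d j)) ℂ) := by
        funext j; split <;> rfl
      rw [e1, tens_one, two_smul]
    have e4 : (2 : ℂ) • (1 : Matrix (∀ i, Fin (d i)) (∀ i, Fin (d i)) ℂ)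
          - tens (fun j => fAf A z j * fAf A z j) - tens (fun j => fR1 A z j * fR1 A z j)
        = tens (fun j => if j = z then (1 : Matrix (Fin (d j)) (Fin (d j)) ℂ)
            - A j 0 * A j 0 else 1)
          + tens (fun j => if j = z then (1 : Matrix (Fin (d j)) (Fin (d j)) ℂ)
            - A j 1 * A j 1 else 1) := by
      rw [eA, eR, tens_ite_smul, tens_ite_smul, ← hsum]
      abel
    rw [e4]
    refine psd_add (tens_psd _ fun j => ?_) (tens_psd _ fun j => ?_)
    · split
      · exact hcontr j 0
      · exact Matrix.PosSemidef.one
    · split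
      · exact hcontr j 1
      · exact Matrix.PosSemidef.one
  · rw [hNat]
    refine psd_nat_smul (one_sub_tens_psd _ (fun i => ?_) (fun i => ?_)) _
    · by_cases hi : i = z
      · subst hi; simp only [fBf, if_true, one_mul]; exact Matrix.PosSemidef.one
      · simpa [fBf, hi] using herm_sq (hherm i 1)
    · by_cases hi : i = z
      · subst hi; simpa [fBf] using Matrix.PosSemidef.zero
      · simpa [fBf, hi] using hcontr i 1
  · refine psd_sum _ _ fun i _ => one_sub_tens_psd _ (fun j => ?_) (fun j => ?_)
    · by_cases hj : j = i
      · simpa [fR2, hj] using herm_sq (hherm j 0)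
      · simp only [fR2, hj, if_false, one_mul]; exact Matrix.PosSemidef.one
    · by_cases hj : j = i
      · simpa [fR2, hj] using hcontr j 0
      · simpa [fR2, hj] using Matrix.PosSemidef.zero
  · rw [hNat]
    refine psd_nat_smul (one_sub_tens_psd _ (fun j => ?_) (fun j => ?_)) _
    · by_cases hj : j = z
      · simpa [fQ1, hj] using herm_sq (hherm j 2)
      · simp only [fQ1, hj, if_false, one_mul]; exact Matrix.PosSemidef.one
    · by_cases hj : j = z
      · simpa [fQ1, hj] using hcontr j 2
      · simpa [fQ1, hj] using Matrix.PosSemidef.zero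
  · refine psd_sum _ _ fun i _ => one_sub_tens_psd _ (fun j => ?_) (fun j => ?_)
    · by_cases hj : j = z
      · simp only [fQ2, hj, if_true, one_mul]; exact Matrix.PosSemidef.one
      · by_cases hji : j = i
        · subst hji; simpa [fQ2, hj] using herm_sq (hherm j 2)
        · simpa [fQ2, hj, hji] using herm_sq (hherm j 1)
    · by_cases hj : j = z
      · simpa [fQ2, hj] using Matrix.PosSemidef.zero
      · by_cases hji : j = i
        · subst hji; simpa [fQ2, hj] using hcontr j 2
        · simpa [fQ2, hj, hji] using hcontr j 1

end main

/-- If the `A i j` are Hermitian with `(A i j)² ≤ 1`, then `Î_l ≤ 3(N−1)·1` in the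
Loewner order. -/
theorem stmt_5 (N : ℕ) (hN : 2 ≤ N) (d : Fin N → ℕ) (l : Fin N → Fin 2)
    (A : ∀ i : Fin N, Fin 3 → Matrix (Fin (d i)) (Fin (d i)) ℂ)
    (hherm : ∀ i j, (A i j).IsHermitian)
    (hcontr : ∀ i j, ((1 : Matrix (Fin (d i)) (Fin (d i)) ℂ) - A i j * A i j).PosSemidef) :
    (((3 * (N - 1) : ℂ)) • (1 : Matrix (∀ i, Fin (d i)) (∀ i, Fin (d i)) ℂ)
        - bellOp (by omega) d l A).PosSemidef := by
  have h : 0 < N := by omega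
  have hmain : (((3 * (N - 1) : ℂ)) • (1 : Matrix (∀ i, Fin (d i)) (∀ i, Fin (d i)) ℂ)
      - bellOp h d l A).PosSemidef := by
    apply psd_half
    have hb : bellOp h d l A
        = ((N - 1 : ℂ) * (-1 : ℂ) ^ (l ⟨0, h⟩ : ℕ)) • tens (fT A ⟨0, h⟩)
          + (∑ i ∈ Finset.univ.erase (⟨0, h⟩ : Fin N),
              ((-1 : ℂ) ^ ((l ⟨0, h⟩ : ℕ) + (l i : ℕ))) • tens (fS A ⟨0, h⟩ i))
          - ∑ i ∈ Finset.univ.erase (⟨0, h⟩ : Fin N),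
              ((-1 : ℂ) ^ (l i : ℕ)) • tens (fU A ⟨0, h⟩ i) := rfl
    rw [hb, key A ⟨0, h⟩ l hN]
    exact rhs_psd A ⟨0, h⟩ l hN hherm hcontr
  exact hmain

end Stmt5
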